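/- Fix complex numbers w, z such that wI − X and zI − Z are invertible, and let c ∈ ℂ and R > 0 be such that xI − X − Z is invertible for every x on the circle |x − c| = R. Then the circle integral ∮_{|x−c|=R} exp(x(w+z) − (w²+z²)/2 − x²/2) · (1 + aᵀ(wI−X)⁻¹(xI−X−Z)⁻¹b) · (1 + aᵀ(xI−X−Z)⁻¹(zI−Z)⁻¹b) dx equals 0. In other words, the product ψ_{𝒳^♭}(x,−1/2,w)·ψ_𝒳(x,−1/2,z)·e^{−x²/2} has zero residue at every pole in x. -/

import Mathlib

/-!
Write `W = wI − X`, `V = zI − Z` and `M = xI − X − Z = W + V + (x − w − z)I`. The rank-one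
condition says `baᵀ = MV − VM − I`, which turns the product of the two Baker–Akhiezer factors
into `1 + aᵀW⁻¹V⁻¹b − aᵀW⁻¹((x − w − z)M⁻¹ + M⁻²)V⁻¹b`. As the Gaussian weight `E` satisfies
`E' = (w + z − x)E` and `(M⁻¹)' = −M⁻²`, the integrand is the derivative of
`E · aᵀW⁻¹M⁻¹V⁻¹b` plus the entire function `E · (1 + aᵀW⁻¹V⁻¹b)`, so it has zero integral
over every circle on which `M` stays invertible.
-/

open Matrix

section Algebra

variable {n R : Type*} [Fintype n] [CommRing R]

theorem smul_one_sub_sub_commutator {A : Type*} [Ring A] [Algebra R A] (x z : R) (P Q : A) :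
    (x • 1 - P - Q) * (z • 1 - Q) - (z • 1 - Q) * (x • 1 - P - Q) = P * Q - Q * P := by
  simp only [sub_mul, mul_sub, smul_mul_assoc, mul_smul_comm, one_mul, mul_one]
  module

theorem dotProduct_mulVec_mul_dotProduct_mulVec (a b : n → R) (P Q : Matrix n n R) :
    (a ⬝ᵥ P *ᵥ b) * (a ⬝ᵥ Q *ᵥ b) = a ⬝ᵥ (P * vecMulVec b a * Q) *ᵥ b := by
  rw [← mulVec_mulVec, ← mulVec_mulVec, vecMulVec_mulVec, mulVec_smul, dotProduct_smul]
  simp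

def sandwichForm (a b : n → R) (P Q : Matrix n n R) : Matrix n n R →ₗ[R] R where
  toFun A := a ⬝ᵥ (P * A * Q) *ᵥ b
  map_add' A B := by simp only [Matrix.mul_add, Matrix.add_mul, add_mulVec, dotProduct_add]
  map_smul' r A := by
    simp only [Matrix.mul_smul, Matrix.smul_mul, smul_mulVec, dotProduct_smul, RingHom.id_apply]

theorem one_add_dotProduct_mul_one_add_dotProduct [DecidableEq n] {U V M : Matrix n n R}
    {a b : n → R} (s : R) (hU : IsUnit U) (hV : IsUnit V) (hM : IsUnit M)
    (hsum : M = U + V + s • 1) (hrank : vecMulVec b a = M * V - V * M - 1) :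
    (1 + a ⬝ᵥ (U⁻¹ * M⁻¹) *ᵥ b) * (1 + a ⬝ᵥ (M⁻¹ * V⁻¹) *ᵥ b) =
      1 + a ⬝ᵥ (U⁻¹ * V⁻¹) *ᵥ b - a ⬝ᵥ (U⁻¹ * (s • M⁻¹ + M⁻¹ * M⁻¹) * V⁻¹) *ᵥ b := by
  rw [isUnit_iff_isUnit_det] at hU hV hM
  have resolvent_identity :
      U⁻¹ * V⁻¹ = M⁻¹ * V⁻¹ + U⁻¹ * (V * (M⁻¹ * V⁻¹)) + s • (U⁻¹ * (M⁻¹ * V⁻¹)) :=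
    calc U⁻¹ * V⁻¹ = U⁻¹ * (M * (M⁻¹ * V⁻¹)) := by rw [mul_nonsing_inv_cancel_left _ _ hM]
      _ = _ := by
        nth_rw 1 [hsum]
        simp only [Matrix.mul_add, Matrix.add_mul, Matrix.smul_mul, Matrix.one_mul,
          Matrix.mul_smul, nonsing_inv_mul_cancel_left _ _ hU]
  have product : (a ⬝ᵥ (U⁻¹ * M⁻¹) *ᵥ b) * (a ⬝ᵥ (M⁻¹ * V⁻¹) *ᵥ b) =
      a ⬝ᵥ (U⁻¹ * (V * (M⁻¹ * V⁻¹)) - U⁻¹ * M⁻¹ - U⁻¹ * (M⁻¹ * (M⁻¹ * V⁻¹))) *ᵥ b := by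
    rw [dotProduct_mulVec_mul_dotProduct_mulVec, hrank]
    simp only [Matrix.mul_sub, Matrix.sub_mul, Matrix.mul_one, Matrix.mul_assoc,
      nonsing_inv_mul_cancel_left _ _ hM, mul_nonsing_inv_cancel_left _ _ hM, mul_nonsing_inv _ hV]
  rw [show ∀ f g : R, (1 + f) * (1 + g) = 1 + f + g + f * g by intros; ring, product,
    resolvent_identity]
  simp only [Matrix.mul_add, Matrix.add_mul, Matrix.mul_smul, Matrix.smul_mul, Matrix.mul_assoc,
    sub_mulVec, add_mulVec, smul_mulVec, dotProduct_sub, dotProduct_add, dotProduct_smul,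
    smul_eq_mul]
  ring

end Algebra

section Analysis

variable {n : Type*} [Fintype n] [DecidableEq n]

attribute [local instance] Matrix.linftyOpNormedRing Matrix.linftyOpNormedAlgebra

theorem hasDerivAt_inv_smul_one_sub {𝕜 : Type*} [RCLike 𝕜] {A : Matrix n n 𝕜} {x : 𝕜}
    (hx : IsUnit (x • 1 - A)) :
    HasDerivAt (fun y : 𝕜 => (y • 1 - A)⁻¹) (-((x • 1 - A)⁻¹ * (x • 1 - A)⁻¹)) x := by
  have hx' : x ∈ resolventSet 𝕜 A := by
    rwa [spectrum.mem_resolventSet_iff, Algebra.algebraMap_eq_smul_one]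
  have h := spectrum.hasDerivAt_resolvent_const_left hx'
  unfold resolvent at h
  simp only [Algebra.algebraMap_eq_smul_one, ← nonsing_inv_eq_ringInverse, sq] at h
  -- `h` is stated for the operator-norm topology, which is defeq to the product topology
  exact h

theorem hasDerivAt_cexp_mul_inv_smul_one_sub (L : Matrix n n ℂ →ₗ[ℂ] ℂ) {A : Matrix n n ℂ}
    (μ ν : ℂ) {x : ℂ} (hx : IsUnit (x • 1 - A)) :
    HasDerivAt (fun y => Complex.exp (y * μ - ν - y ^ 2 / 2) * L (y • 1 - A)⁻¹)
      (-(Complex.exp (x * μ - ν - x ^ 2 / 2) *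
        L ((x - μ) • (x • 1 - A)⁻¹ + (x • 1 - A)⁻¹ * (x • 1 - A)⁻¹))) x := by
  have hexp : HasDerivAt (fun y => Complex.exp (y * μ - ν - y ^ 2 / 2))
      (Complex.exp (x * μ - ν - x ^ 2 / 2) * (μ - x)) x := by
    refine HasDerivAt.cexp ?_
    refine ((((hasDerivAt_id' x).mul_const μ).sub_const ν).sub
      ((hasDerivAt_pow 2 x).div_const 2)).congr_deriv ?_
    ring
  have hL : HasDerivAt (fun y => L (y • 1 - A)⁻¹) (L (-((x • 1 - A)⁻¹ * (x • 1 - A)⁻¹))) x :=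
    L.toContinuousLinearMap.hasFDerivAt.comp_hasDerivAt x (hasDerivAt_inv_smul_one_sub hx)
  refine (hexp.mul hL).congr_deriv ?_
  simp only [map_add, map_smul, map_neg, smul_eq_mul]
  ring

end Analysis

theorem circleIntegral_eq_zero_of_eqOn_deriv_add {E : Type*} [NormedAddCommGroup E]
    [NormedSpace ℂ E] [CompleteSpace E] {f F F' g : ℂ → E} {c : ℂ} {R : ℝ} (hR : 0 ≤ R)
    (hF : ∀ x ∈ Metric.sphere c R, HasDerivAt F (F' x) x) (hg : Differentiable ℂ g)
    (hf : Set.EqOn f (fun x => F' x + g x) (Metric.sphere c R)) :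
    (∮ x in C(c, R), f x) = 0 := by
  obtain ⟨G, hG⟩ := hg.isExactOn_univ
  rw [circleIntegral.integral_congr hR hf]
  exact circleIntegral.integral_eq_zero_of_hasDerivWithinAt hR fun x hx =>
    ((hF x hx).add (hG x trivial)).hasDerivWithinAt

theorem circleIntegral_bispectral_product_eq_zero_general {N : ℕ}
    (X Z : Matrix (Fin N) (Fin N) ℂ) (a b : Fin N → ℂ)
    (hrank : X * Z - Z * X - 1 = Matrix.vecMulVec b a)
    (w z : ℂ)
    (hW : IsUnit (w • (1 : Matrix (Fin N) (Fin N) ℂ) - X))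
    (hZ : IsUnit (z • (1 : Matrix (Fin N) (Fin N) ℂ) - Z))
    (c : ℂ) (R : ℝ) (hR : 0 < R)
    (hXZ : ∀ x : ℂ, ‖x - c‖ = R →
      IsUnit (x • (1 : Matrix (Fin N) (Fin N) ℂ) - X - Z)) :
    (∮ x in C(c, R),
      Complex.exp (x * (w + z) - (w ^ 2 + z ^ 2) / 2 - x ^ 2 / 2) *
        (1 + a ⬝ᵥ ((w • (1 : Matrix (Fin N) (Fin N) ℂ) - X)⁻¹
            * (x • 1 - X - Z)⁻¹).mulVec b) *
        (1 + a ⬝ᵥ ((x • (1 : Matrix (Fin N) (Fin N) ℂ) - X - Z)⁻¹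
            * (z • 1 - Z)⁻¹).mulVec b)) = 0 := by
  have hM : ∀ x ∈ Metric.sphere c R, IsUnit (x • 1 - X - Z) := fun x hx =>
    hXZ x (mem_sphere_iff_norm.mp hx)
  refine circleIntegral_eq_zero_of_eqOn_deriv_add hR.le
    (fun x hx => hasDerivAt_cexp_mul_inv_smul_one_sub (sandwichForm a b (w • 1 - X)⁻¹ (z • 1 - Z)⁻¹)
      (w + z) ((w ^ 2 + z ^ 2) / 2) (A := X + Z) (by rw [← sub_sub]; exact hM x hx))
    (g := fun x => Complex.exp (x * (w + z) - (w ^ 2 + z ^ 2) / 2 - x ^ 2 / 2) *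
      (1 + a ⬝ᵥ ((w • 1 - X)⁻¹ * (z • 1 - Z)⁻¹) *ᵥ b)) (by fun_prop) fun x hx => ?_
  have hrank' : vecMulVec b a =
      (x • 1 - X - Z) * (z • 1 - Z) - (z • 1 - Z) * (x • 1 - X - Z) - 1 := by
    rw [smul_one_sub_sub_commutator, hrank]
  have hsum : x • 1 - X - Z = (w • 1 - X) + (z • 1 - Z) + (x - (w + z)) • 1 := by module
  rw [mul_assoc, one_add_dotProduct_mul_one_add_dotProduct _ hW hZ (hM x hx) hsum hrank']
  simp only [sandwichForm, LinearMap.coe_mk, AddHom.coe_mk, sub_sub]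
  ring

/-- The product `ψ_{𝒳^♭}(x,−1/2,w)·ψ_𝒳(x,−1/2,z)·e^{−x²/2}` has vanishing integral over
every circle avoiding the poles; i.e., zero residue at every pole in `x`. -/
theorem circleIntegral_bispectral_product_eq_zero {N : ℕ} (hN : 0 < N)
    (X Z : Matrix (Fin N) (Fin N) ℂ) (a b : Fin N → ℂ)
    (hrank : X * Z - Z * X - 1 = Matrix.vecMulVec b a)
    (w z : ℂ)
    (hW : IsUnit (w • (1 : Matrix (Fin N) (Fin N) ℂ) - X))
    (hZ : IsUnit (z • (1 : Matrix (Fin N) (Fin N) ℂ) - Z))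
    (c : ℂ) (R : ℝ) (hR : 0 < R)
    (hXZ : ∀ x : ℂ, ‖x - c‖ = R →
      IsUnit (x • (1 : Matrix (Fin N) (Fin N) ℂ) - X - Z)) :
    (∮ x in C(c, R),
      Complex.exp (x * (w + z) - (w ^ 2 + z ^ 2) / 2 - x ^ 2 / 2) *
        (1 + a ⬝ᵥ ((w • (1 : Matrix (Fin N) (Fin N) ℂ) - X)⁻¹
            * (x • 1 - X - Z)⁻¹).mulVec b) *
        (1 + a ⬝ᵥ ((x • (1 : Matrix (Fin N) (Fin N) ℂ) - X - Z)⁻¹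
            * (z • 1 - Z)⁻¹).mulVec b)) = 0 :=
  circleIntegral_bispectral_product_eq_zero_general X Z a b hrank w z hW hZ c R hR hXZ
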